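/- arXiv:2211.09659 — 8 statements merged into one kernel-verified Lean document; each statement's English description precedes it below -/
import Mathlib

section
/- Let (G,s,t,d) be a feasible flow network (one admitting at least one flow meeting the demands, with all demands finite). Then the maximum demand over all one-way st-cuts equals the minimum size over all st-flows. -/
open Finset

section Prelude

variable {V : Type*}

/-- A (directed) path in the graph with edge relation `E`: nonempty, consecutive
vertices joined by edges, and vertices pairwise distinct. -/
def IsPathOn (E : V → V → Prop) (p : List V) : Prop :=
  p ≠ [] ∧ p.Chain' E ∧ p.Nodup

/-- Reachability in the graph with edge relation `E`. -/
def Reaches (E : V → V → Prop) : V → V → Prop := Relation.ReflTransGen E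

/-- The edges of a path, as the list of consecutive pairs of vertices. -/
def pathEdges (p : List V) : List (V × V) := p.zip p.tail

/-- A path cover: a multiset of paths such that every vertex is on some path. -/
def IsPathCover (E : V → V → Prop) (P : Multiset (List V)) : Prop :=
  (∀ p ∈ P, IsPathOn E p) ∧ ∀ v : V, ∃ p ∈ P, v ∈ p

/-- The width of a graph: the minimum size of a path cover. -/
noncomputable def gwidth (E : V → V → Prop) : ℕ :=
  sInf {n | ∃ P : Multiset (List V), IsPathCover E P ∧ Multiset.card P = n}

/-- A DAG: no proper (directed) cycles. -/
def IsDAG (E : V → V → Prop) : Prop := ∀ v, ¬ Relation.TransGen E v v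

/-- The edge relation of a finite edge set. -/
def edgeRel (E : Finset (V × V)) : V → V → Prop := fun a b => (a, b) ∈ E

/-- Multiplicity of an edge with respect to a multiset of paths. -/
def mult [DecidableEq V] (P : Multiset (List V)) (e : V × V) : ℕ :=
  Multiset.countP (fun p => e ∈ pathEdges p) P

/-- A flow network: a finite edge set, source, sink, and lower bounds (demands). -/
structure FlowNet (V : Type*) where
  E : Finset (V × V)
  s : V
  t : V
  d : V × V → ℕ

/-- A flow: supported on edges, satisfying the demands, and flow conservation at
every vertex other than the source and the sink. -/
def IsFlow [Fintype V] (N : FlowNet V) (f : V × V → ℕ) : Prop :=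
  (∀ e, e ∉ N.E → f e = 0) ∧ (∀ e ∈ N.E, N.d e ≤ f e) ∧
  ∀ v : V, v ≠ N.s → v ≠ N.t → (∑ u : V, f (u, v)) = ∑ u : V, f (v, u)

/-- The size of a flow: net outflow at the source. -/
def flowSize [Fintype V] (N : FlowNet V) (f : V × V → ℕ) : ℤ :=
  (∑ u : V, (f (N.s, u) : ℤ)) - ∑ u : V, (f (u, N.s) : ℤ)

/-- An `st`-cut, given by the source side `S` (the sink side is the complement). -/
def IsCut (N : FlowNet V) (S : Set V) : Prop := N.s ∈ S ∧ N.t ∉ S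

/-- A one-way cut: a cut with no edge crossing from `T = Sᶜ` to `S`. -/
def IsOwCut (N : FlowNet V) (S : Set V) : Prop :=
  IsCut N S ∧ ∀ e ∈ N.E, e.1 ∉ S → e.2 ∉ S

open Classical in
/-- The demand of a cut: sum of demands of edges crossing from `S` to `T`. -/
noncomputable def cutDemand (N : FlowNet V) (S : Set V) : ℕ :=
  ∑ e ∈ N.E.filter (fun e => e.1 ∈ S ∧ e.2 ∉ S), N.d e

open Classical in
/-- The net flow across a cut: flow from `S` to `T` minus flow from `T` to `S`. -/
noncomputable def cutFlow (N : FlowNet V) (S : Set V) (f : V × V → ℕ) : ℤ :=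
  (∑ e ∈ N.E.filter (fun e => e.1 ∈ S ∧ e.2 ∉ S), (f e : ℤ))
    - ∑ e ∈ N.E.filter (fun e => e.1 ∉ S ∧ e.2 ∈ S), (f e : ℤ)

/-- The residual graph of a network w.r.t. a flow `f`: reverse edges of all edges,
plus the edges whose flow strictly exceeds the demand. -/
def ResidualEdge (N : FlowNet V) (f : V × V → ℕ) (u v : V) : Prop :=
  (v, u) ∈ N.E ∨ ((u, v) ∈ N.E ∧ N.d (u, v) < f (u, v))

/-- Vertices of the flow reduction: two copies of each vertex, plus source/sink. -/
abbrev FR (V : Type*) := (V ⊕ V) ⊕ Bool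

def vinF (v : V) : FR V := Sum.inl (Sum.inl v)
def voutF (v : V) : FR V := Sum.inl (Sum.inr v)
def fsrc : FR V := Sum.inr false
def fsnk : FR V := Sum.inr true

/-- Demands of the flow reduction: `1` on each edge `(vin v, vout v)`, else `0`. -/
def redD [DecidableEq V] : FR V × FR V → ℕ
  | (Sum.inl (Sum.inl a), Sum.inl (Sum.inr b)) => if a = b then 1 else 0
  | _ => 0

/-- The flow reduction of the DAG with edge set `E`. -/
def redNet [Fintype V] [DecidableEq V] (E : Finset (V × V)) : FlowNet (FR V) where
  E := (univ.image fun v : V => (fsrc, vinF v)) ∪ (univ.image fun v : V => (voutF v, fsnk))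
        ∪ (univ.image fun v : V => (vinF v, voutF v))
        ∪ (E.image fun e => (voutF e.1, vinF e.2))
  s := fsrc
  t := fsnk
  d := redD

/-- The layered cut `L^{≤ l}`: the source together with all split vertices of level `≤ l`. -/
def layerCut (ℓ : FR V → ℤ) (l : ℤ) : Set (FR V) :=
  {x | x = fsrc ∨ ((∃ v : V, x = vinF v ∨ x = voutF v) ∧ ℓ x ≤ l)}

open Classical in
/-- The layered antichain `A^l`. -/
noncomputable def layerAntichain [Fintype V] (ℓ : FR V → ℤ) (l : ℤ) : Finset V :=
  univ.filter (fun v => ℓ (vinF v) ≤ l ∧ l < ℓ (voutF v))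

end Prelude

/-! A minimum flow admits no flow-decreasing path from `s` to `t` in its residual graph: pushing
one unit backwards along such a path (lowering the flow on edges carrying more than their demand,
raising it on reversed edges) would give a smaller flow. Hence the set `S` of vertices reachable
from `s` in the residual graph avoids `t`. It is a one-way cut, since every reversed edge is
residual, and every edge leaving `S` carries exactly its demand. As the net flow across any cut
is the flow size, the demand of `S` equals the size of the minimum flow, while every one-way cut
has demand at most the size of any flow. -/

theorem List.exists_nodup_isChain_cons_of_relationReflTransGen {α : Type*}
    {r : α → α → Prop} {a b : α} (h : Relation.ReflTransGen r a b) :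
    ∃ l, (a :: l).IsChain r ∧ (a :: l).Nodup ∧ (a :: l).getLast (cons_ne_nil _ _) = b := by
  induction h using Relation.ReflTransGen.head_induction_on with
  | refl => exact ⟨[], .singleton _, nodup_singleton _, rfl⟩
  | @head a c hac _ ih =>
    obtain ⟨l, hchain, hnodup, hlast⟩ := ih
    by_cases ha : a ∈ c :: l
    · obtain ⟨p, q, hpq⟩ := append_of_mem ha
      refine ⟨q, hchain.suffix ⟨p, hpq.symm⟩,
        hnodup.sublist (hpq ▸ sublist_append_right p _), ?_⟩
      rw [← hlast]
      simp only [hpq, getLast_append_of_ne_nil _ (cons_ne_nil a q)]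
    · exact ⟨c :: l, hchain.cons_cons hac, nodup_cons.2 ⟨ha, hnodup⟩,
        by rwa [getLast_cons_cons]⟩

section NetOutflow

variable {V : Type*} [Fintype V]

def netOutflow (f : V × V → ℕ) (v : V) : ℤ :=
  ∑ u, (f (v, u) : ℤ) - ∑ u, (f (u, v) : ℤ)

theorem flowSize_eq_netOutflow (N : FlowNet V) (f : V × V → ℕ) :
    flowSize N f = netOutflow f N.s :=
  rfl

theorem netOutflow_update [DecidableEq V] (f : V × V → ℕ) (x y : V) (n : ℕ) (v : V) :
    netOutflow (Function.update f (x, y) n) v =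
      netOutflow f v +
        ((n : ℤ) - f (x, y)) * ((if v = x then 1 else 0) - if v = y then 1 else 0) := by
  set c : ℤ := n - f (x, y)
  have hcast : ∀ e, (Function.update f (x, y) n e : ℤ) = f e + if e = (x, y) then c else 0 := by
    intro e
    rcases eq_or_ne e (x, y) with rfl | he <;> simp [c, *]
  have hout : ∑ u, (if (v, u) = (x, y) then c else 0) = if v = x then c else 0 := by
    by_cases hx : v = x <;> simp [Prod.ext_iff, hx]
  have hin : ∑ u, (if (u, v) = (x, y) then c else 0) = if v = y then c else 0 := by
    by_cases hy : v = y <;> simp [Prod.ext_iff, hy]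
  simp only [netOutflow, hcast, Finset.sum_add_distrib, hout, hin]
  split_ifs <;> ring

theorem sum_netOutflow_eq (f : V × V → ℕ) (S : Set V) [DecidablePred (· ∈ S)] :
    ∑ v ∈ univ.filter (· ∈ S), netOutflow f v =
      ∑ e ∈ univ.filter (fun e : V × V => e.1 ∈ S ∧ e.2 ∉ S), (f e : ℤ) -
        ∑ e ∈ univ.filter (fun e : V × V => e.1 ∉ S ∧ e.2 ∈ S), (f e : ℤ) := by
  have hout : ∑ v ∈ univ.filter (· ∈ S), ∑ u, (f (v, u) : ℤ) =
      ∑ e : V × V, if e.1 ∈ S then (f e : ℤ) else 0 := by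
    rw [Fintype.sum_prod_type, sum_filter]
    exact sum_congr rfl fun v _ => by split_ifs <;> simp
  have hin : ∑ v ∈ univ.filter (· ∈ S), ∑ u, (f (u, v) : ℤ) =
      ∑ e : V × V, if e.2 ∈ S then (f e : ℤ) else 0 := by
    rw [Fintype.sum_prod_type_right, sum_filter]
    exact sum_congr rfl fun v _ => by split_ifs <;> simp
  have hpoint : ∀ e : V × V,
      ((if e.1 ∈ S then (f e : ℤ) else 0) - if e.2 ∈ S then (f e : ℤ) else 0) =
        (if e.1 ∈ S ∧ e.2 ∉ S then (f e : ℤ) else 0) -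
          if e.1 ∉ S ∧ e.2 ∈ S then (f e : ℤ) else 0 := by
    intro e
    split_ifs <;> simp_all
  simp only [netOutflow, sum_sub_distrib]
  rw [hout, hin, ← sum_sub_distrib]
  simp only [hpoint, sum_sub_distrib, sum_filter]

end NetOutflow

section Flows

variable {V : Type*} {N : FlowNet V} {f g : V × V → ℕ}

def MeetsDemands (N : FlowNet V) (f : V × V → ℕ) : Prop :=
  (∀ e, e ∉ N.E → f e = 0) ∧ ∀ e ∈ N.E, N.d e ≤ f e

theorem isFlow_iff [Fintype V] : IsFlow N f ↔
    MeetsDemands N f ∧ ∀ v, v ≠ N.s → v ≠ N.t → netOutflow f v = 0 := by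
  simp only [IsFlow, MeetsDemands, and_assoc]
  refine and_congr Iff.rfl (and_congr Iff.rfl (forall₃_congr fun v _ _ => ?_))
  rw [netOutflow, sub_eq_zero, eq_comm]
  norm_cast

theorem MeetsDemands.update [DecidableEq V] (hf : MeetsDemands N f) {e₀ : V × V}
    (he₀ : e₀ ∈ N.E) {n : ℕ} (hn : N.d e₀ ≤ n) :
    MeetsDemands N (Function.update f e₀ n) := by
  refine ⟨fun e he => ?_, fun e he => ?_⟩
  · rw [Function.update_of_ne (ne_of_mem_of_not_mem he₀ he).symm, hf.1 e he]
  · rcases eq_or_ne e e₀ with rfl | hne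
    · rwa [Function.update_self]
    · rw [Function.update_of_ne hne]
      exact hf.2 e he

theorem ResidualEdge.of_apply_eq {a b : V} (h : ResidualEdge N f a b)
    (hfg : g (a, b) = f (a, b)) : ResidualEdge N g a b := by
  unfold ResidualEdge at *
  rwa [hfg]

theorem ResidualEdge.exists_push [Fintype V] [DecidableEq V] {a b : V} (hf : MeetsDemands N f)
    (h : ResidualEdge N f a b) :
    ∃ f', MeetsDemands N f' ∧ (∀ e : V × V, e.1 ≠ a → e.1 ≠ b → f' e = f e) ∧
      ∀ v, netOutflow f' v =
        netOutflow f v - (if v = a then 1 else 0) + if v = b then 1 else 0 := by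
  rcases h with hba | ⟨hab, hlt⟩
  · refine ⟨Function.update f (b, a) (f (b, a) + 1), hf.update hba (by linarith [hf.2 _ hba]),
      fun e _ heb => Function.update_of_ne (fun h => heb (congrArg Prod.fst h)) _ _, fun v => ?_⟩
    rw [netOutflow_update]
    push_cast
    ring
  · refine ⟨Function.update f (a, b) (f (a, b) - 1), hf.update hab (by omega),
      fun e hea _ => Function.update_of_ne (fun h => hea (congrArg Prod.fst h)) _ _, fun v => ?_⟩
    rw [netOutflow_update, Nat.cast_sub (by omega)]
    push_cast
    ring

theorem exists_augment [Fintype V] [DecidableEq V] (hf : MeetsDemands N f) :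
    ∀ (a : V) (l : List V), (a :: l).IsChain (ResidualEdge N f) → (a :: l).Nodup →
      ∃ f', MeetsDemands N f' ∧ (∀ e : V × V, e.1 ∉ a :: l → f' e = f e) ∧
        ∀ v, netOutflow f' v = netOutflow f v - (if v = a then 1 else 0) +
          if v = (a :: l).getLast (List.cons_ne_nil a l) then 1 else 0 := by
  intro a l
  induction l generalizing a with
  | nil =>
    exact fun _ _ => ⟨f, hf, fun _ _ => rfl, fun v => by rw [List.getLast_singleton]; ring⟩
  | cons b l ih =>
    intro hchain hnodup
    obtain ⟨hab, hchain⟩ := List.isChain_cons_cons.1 hchain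
    obtain ⟨ha, hnodup⟩ := List.nodup_cons.1 hnodup
    obtain ⟨g, hg, hgf, hgnet⟩ := ih b hchain hnodup
    have hab' : ResidualEdge N g a b := hab.of_apply_eq (hgf (a, b) ha)
    obtain ⟨g', hg', hg'g, hg'net⟩ := hab'.exists_push hg
    refine ⟨g', hg', fun e he => ?_, fun v => ?_⟩
    · simp only [List.mem_cons, not_or] at he
      rw [hg'g e he.1 he.2.1, hgf e (by simpa using he.2)]
    · rw [hg'net, hgnet, List.getLast_cons_cons]
      ring

end Flows

section Cuts

open Classical

variable {V : Type*} {N : FlowNet V} {f : V × V → ℕ} {S : Set V}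

theorem cutFlow_eq_flowSize [Fintype V] (hf : IsFlow N f) (hS : IsCut N S) :
    cutFlow N S f = flowSize N f := by
  have hsupp : ∀ (p : V × V → Prop) [DecidablePred p],
      ∑ e ∈ N.E.filter p, (f e : ℤ) = ∑ e ∈ univ.filter p, (f e : ℤ) := fun p =>
    sum_subset (filter_subset_filter p (subset_univ _)) fun e he hne => by
      have he' : e ∉ N.E := fun h => hne (mem_filter.2 ⟨h, (mem_filter.1 he).2⟩)
      simp [hf.1 e he']
  rw [cutFlow, hsupp, hsupp, ← sum_netOutflow_eq, flowSize_eq_netOutflow]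
  refine sum_eq_single_of_mem N.s (by simpa using hS.1) fun v hv hvs => ?_
  exact (isFlow_iff.1 hf).2 v hvs (by rintro rfl; exact hS.2 (by simpa using hv))

theorem IsOwCut.cutFlow_eq (hS : IsOwCut N S) :
    cutFlow N S f = ∑ e ∈ N.E.filter (fun e => e.1 ∈ S ∧ e.2 ∉ S), (f e : ℤ) := by
  have hback : N.E.filter (fun e => e.1 ∉ S ∧ e.2 ∈ S) = ∅ :=
    filter_false_of_mem fun e he h => hS.2 e he h.1 h.2
  rw [cutFlow, hback, sum_empty, sub_zero]

theorem IsOwCut.cutDemand_le_flowSize [Fintype V] (hS : IsOwCut N S) (hf : IsFlow N f) :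
    (cutDemand N S : ℤ) ≤ flowSize N f := by
  rw [← cutFlow_eq_flowSize hf hS.1, hS.cutFlow_eq, cutDemand]
  push_cast
  exact sum_le_sum fun e he => by exact_mod_cast hf.2.1 e (mem_filter.1 he).1

theorem IsOwCut.cutDemand_eq_flowSize [Fintype V] (hS : IsOwCut N S) (hf : IsFlow N f)
    (htight : ∀ e ∈ N.E, e.1 ∈ S → e.2 ∉ S → f e = N.d e) :
    (cutDemand N S : ℤ) = flowSize N f := by
  rw [← cutFlow_eq_flowSize hf hS.1, hS.cutFlow_eq, cutDemand]
  push_cast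
  refine sum_congr rfl fun e he => ?_
  obtain ⟨he, h1, h2⟩ := mem_filter.1 he
  rw [htight e he h1 h2]

end Cuts

theorem not_reflTransGen_residualEdge_of_isMinFlow {V : Type*} [Fintype V] {N : FlowNet V}
    (hst : N.s ≠ N.t) {fm : V × V → ℕ} (hfm : IsFlow N fm)
    (hmin : ∀ f, IsFlow N f → flowSize N fm ≤ flowSize N f) :
    ¬ Relation.ReflTransGen (ResidualEdge N fm) N.s N.t := by
  classical
  intro h
  obtain ⟨l, hchain, hnodup, hlast⟩ := List.exists_nodup_isChain_cons_of_relationReflTransGen h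
  obtain ⟨f, hf, -, hnet⟩ := exists_augment (isFlow_iff.1 hfm).1 N.s l hchain hnodup
  simp only [hlast] at hnet
  have hflow : IsFlow N f := isFlow_iff.2 ⟨hf, fun v hs ht => by
    rw [hnet, if_neg hs, if_neg ht, (isFlow_iff.1 hfm).2 v hs ht]; ring⟩
  have hsize := hmin f hflow
  rw [flowSize_eq_netOutflow, flowSize_eq_netOutflow, hnet, if_pos rfl, if_neg hst] at hsize
  linarith

/-- in a feasible flow network (a minimum flow is attained), the maximum
demand over all one-way st-cuts equals the minimum size over all st-flows. -/
theorem stmt_3 {V : Type*} [Fintype V] (N : FlowNet V) (hst : N.s ≠ N.t)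
    (fm : V × V → ℕ) (hfm : IsFlow N fm)
    (hmin : ∀ f, IsFlow N f → flowSize N fm ≤ flowSize N f) :
    ∃ S : Set V, IsOwCut N S ∧ (∀ S', IsOwCut N S' → cutDemand N S' ≤ cutDemand N S) ∧
      (cutDemand N S : ℤ) = flowSize N fm := by
  set S : Set V := {v | Relation.ReflTransGen (ResidualEdge N fm) N.s v}
  have hS : IsOwCut N S :=
    ⟨⟨.refl, not_reflTransGen_residualEdge_of_isMinFlow hst hfm hmin⟩,
      fun e he h1 h2 => h1 (h2.tail (Or.inl he))⟩
  have htight : ∀ e ∈ N.E, e.1 ∈ S → e.2 ∉ S → fm e = N.d e := fun e he h1 h2 =>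
    le_antisymm (not_lt.1 fun hlt => h2 (h1.tail (Or.inr ⟨he, hlt⟩))) (hfm.2.1 e he)
  have hdemand := hS.cutDemand_eq_flowSize hfm htight
  refine ⟨S, hS, fun S' hS' => ?_, hdemand⟩
  exact_mod_cast (hS'.cutDemand_le_flowSize hfm).trans hdemand.ge
end

section
/- In the flow reduction (𝒢,s,t,d) of a DAG G, if (S,T) is a one-way st-cut, then the set A = { v ∈ V : v^in ∈ S and v^out ∈ T } is an antichain of G (no vertex of A reaches another vertex of A). -/
open Finset

/-- in the flow reduction, a one-way st-cut induces an antichain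
`A = { v : vin v ∈ S ∧ vout v ∉ S }` of the original DAG. -/
theorem stmt_6 {V : Type*} [Fintype V] [DecidableEq V] (E : Finset (V × V))
    (S : Set (FR V)) (hS : IsOwCut (redNet E) S) :
    ∀ u ∈ {v : V | vinF v ∈ S ∧ voutF v ∉ S}, ∀ w ∈ {v : V | vinF v ∈ S ∧ voutF v ∉ S},
      u ≠ w → ¬ Reaches (edgeRel E) u w := by

  intro u hu w hw hne hreach
  have hedge : ∀ a b : V, (a, b) ∈ E → (voutF a, vinF b) ∈ (redNet E).E := by
    intro a b hab
    simp only [redNet, Finset.mem_union, Finset.mem_image]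
    exact Or.inr ⟨(a, b), hab, rfl⟩
  have hsplit : ∀ a : V, (vinF a, voutF a) ∈ (redNet E).E := by
    intro a
    simp only [redNet, Finset.mem_union, Finset.mem_image]
    exact Or.inl (Or.inr ⟨a, Finset.mem_univ a, rfl⟩)
  have how := hS.2
  -- key: anything reachable from u (in ≥1 step) has vin ∉ S
  have key : ∀ x : V, Relation.TransGen (edgeRel E) u x → vinF x ∉ S ∧ voutF x ∉ S := by
    intro x hx
    induction hx with
    | @single b h =>
      have h1 : vinF b ∉ S := how _ (hedge u b h) hu.2
      exact ⟨h1, how _ (hsplit b) h1⟩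
    | @tail _ c _ h ih =>
      have h1 := how _ (hedge _ _ h) ih.2
      exact ⟨h1, how _ (hsplit _) h1⟩
  rcases (Relation.reflTransGen_iff_eq_or_transGen.mp hreach) with h | h
  · exact hne h.symm
  · exact (key w h).1 hw.1
end

section
/- Let G be a DAG with a path cover 𝒫 of size t, and let v be a vertex with more than t in-neighbors. Then some edge incoming to v is transitive: there exist in-neighbors u, u' of v with u ≠ u' such that u reaches u' in G, and hence the edge (u,v) can be removed while preserving reachability. Consequently there exists a transitive sparsification of G in which v has at most t incoming edges. -/
open Finset

/-!
Two in-neighbours of `v` on the same path of the cover are comparable under reachability, so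
any set of pairwise incomparable vertices has at most `t` elements; with more than `t`
in-neighbours, two of them are therefore comparable. For the sparsification keep, among the
edges into `v`, only those leaving a reachability-maximal in-neighbour. These maximal
in-neighbours are pairwise incomparable, hence at most `t`; every other in-neighbour reaches
one of them along a walk that avoids `v` (acyclicity), so no reachability is lost.
-/

section Reachability

variable {V : Type*}

lemma List.IsChain.reflTransGen_or_reflTransGen {E : V → V → Prop} {p : List V}
    (hp : p.IsChain E) {a b : V} (ha : a ∈ p) (hb : b ∈ p) :
    Relation.ReflTransGen E a b ∨ Relation.ReflTransGen E b a := by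
  obtain rfl | hne := eq_or_ne a b
  · exact Or.inl .refl
  have hpair : p.Pairwise (Relation.ReflTransGen E) :=
    (hp.imp fun _ _ => .single).pairwise
  have : Std.Symm fun x y => Relation.ReflTransGen E x y ∨ Relation.ReflTransGen E y x :=
    ⟨fun _ _ => Or.symm⟩
  have hcomp : p.Pairwise fun x y => Relation.ReflTransGen E x y ∨ Relation.ReflTransGen E y x :=
    hpair.imp Or.inl
  exact hcomp.forall ha hb hne

lemma IsDAG.exists_reaches_maximal [Finite V] {E : V → V → Prop} (hdag : IsDAG E)
    {S : Set V} {u : V} (hu : u ∈ S) :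
    ∃ m ∈ S, Reaches E u m ∧ ∀ w ∈ S, Reaches E m w → w = m := by
  have : Std.Irrefl (flip (Relation.TransGen E)) := ⟨hdag⟩
  have : IsTrans V (flip (Relation.TransGen E)) := ⟨fun _ _ _ h₁ h₂ => h₂.trans h₁⟩
  obtain ⟨m, ⟨hmS, hum⟩, hmax⟩ :=
    (Finite.wellFounded_of_trans_of_irrefl (flip (Relation.TransGen E))).has_min
      {w | w ∈ S ∧ Reaches E u w} ⟨u, hu, .refl⟩
  refine ⟨m, hmS, hum, fun w hwS hmw => ?_⟩
  rcases Relation.reflTransGen_iff_eq_or_transGen.mp hmw with h | h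
  · exact h
  · exact absurd h (hmax w ⟨hwS, hum.trans hmw⟩)

/-- The easy half of Dilworth's theorem: an antichain meets each path of a cover at most once. -/
lemma IsPathCover.card_le_of_antichain {E : V → V → Prop} {P : Multiset (List V)}
    (hP : IsPathCover E P) {S : Finset V} (hS : ∀ a ∈ S, ∀ b ∈ S, Reaches E a b → a = b) :
    S.card ≤ Multiset.card P := by
  classical
  choose path hpathP hmem using hP.2
  have hinj : Set.InjOn path S := fun a ha b hb hab =>
    ((hP.1 _ (hpathP a)).2.1.reflTransGen_or_reflTransGen (hmem a) (hab ▸ hmem b)).elim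
      (hS a ha b hb) (fun h => (hS b hb a ha h).symm)
  calc S.card ≤ P.toFinset.card :=
        Finset.card_le_card_of_injOn path (fun a _ => Multiset.mem_toFinset.mpr (hpathP a)) hinj
    _ ≤ Multiset.card P := Multiset.toFinset_card_le P

end Reachability

section Sparsification

variable {V : Type*} [DecidableEq V] {E : Finset (V × V)} {v : V} {M : Finset V}

def pruneInto (E : Finset (V × V)) (v : V) (M : Finset V) : Finset (V × V) :=
  E.filter fun e => e.2 ≠ v ∨ e.1 ∈ M

lemma pruneInto_subset : pruneInto E v M ⊆ E := Finset.filter_subset _ _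

lemma reaches_pruneInto_of_not_reaches {a b : V} (hab : Reaches (edgeRel E) a b)
    (hvb : ¬ Reaches (edgeRel E) v b) : Reaches (edgeRel (pruneInto E v M)) a b := by
  induction hab using Relation.ReflTransGen.head_induction_on with
  | refl => exact .refl
  | @head x c hxc hcb ih =>
    have hcv : c ≠ v := by
      rintro rfl
      exact hvb hcb
    exact .head (Finset.mem_filter.mpr ⟨hxc, Or.inl hcv⟩) ih

lemma reaches_pruneInto_iff (hdag : IsDAG (edgeRel E)) (hM : ∀ m ∈ M, (m, v) ∈ E)
    (hdom : ∀ u, (u, v) ∈ E → ∃ m ∈ M, Reaches (edgeRel E) u m) {a b : V} :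
    Reaches (edgeRel (pruneInto E v M)) a b ↔ Reaches (edgeRel E) a b := by
  refine ⟨fun h => Relation.ReflTransGen.mono (fun _ _ he => pruneInto_subset he) _ _ h,
    fun hab => ?_⟩
  have hedge : ∀ x y, (x, y) ∈ E → Reaches (edgeRel (pruneInto E v M)) x y := by
    intro x y hxy
    by_cases hkept : y ≠ v ∨ x ∈ M
    · exact .single (Finset.mem_filter.mpr ⟨hxy, hkept⟩)
    have hyv : y = v := not_not.mp fun h => hkept (Or.inl h)
    rw [hyv] at hxy ⊢
    obtain ⟨m, hmM, hxm⟩ := hdom x hxy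
    -- `v` cannot reach the in-neighbour `m`, as that would close a cycle through `v`
    have hvm : ¬ Reaches (edgeRel E) v m := fun hvm => hdag v (.tail' hvm (hM m hmM))
    exact (reaches_pruneInto_of_not_reaches hxm hvm).tail
      (Finset.mem_filter.mpr ⟨hM m hmM, Or.inr hmM⟩)
  induction hab with
  | refl => exact .refl
  | tail _ hcd ih => exact ih.trans (hedge _ _ hcd)

lemma card_filter_mem_pruneInto_le [Fintype V] :
    (Finset.univ.filter fun u => (u, v) ∈ pruneInto E v M).card ≤ M.card := by
  refine Finset.card_le_card fun u hu => ?_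
  exact (Finset.mem_filter.mp (Finset.mem_filter.mp hu).2).2.resolve_left (· rfl)

end Sparsification

/-- if a DAG has a path cover of size `t` and `v` has more than `t`
in-neighbors, then some incoming edge of `v` is transitive, and there is a transitive
sparsification in which `v` has at most `t` incoming edges. -/
theorem stmt_9 {V : Type*} [Fintype V] [DecidableEq V] (E : Finset (V × V))
    (hdag : IsDAG (edgeRel E)) (P : Multiset (List V)) (t : ℕ)
    (hP : IsPathCover (edgeRel E) P) (hcard : Multiset.card P = t)
    (v : V) (hv : t < (Finset.univ.filter fun u => (u, v) ∈ E).card) :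
    (∃ u u' : V, (u, v) ∈ E ∧ (u', v) ∈ E ∧ u ≠ u' ∧ Reaches (edgeRel E) u u') ∧
    ∃ E' : Finset (V × V), E' ⊆ E ∧
      (∀ a b : V, Reaches (edgeRel E') a b ↔ Reaches (edgeRel E) a b) ∧
      (Finset.univ.filter fun u => (u, v) ∈ E').card ≤ t := by
  classical
  set S := Finset.univ.filter fun u => (u, v) ∈ E
  have hmemS : ∀ u, u ∈ S ↔ (u, v) ∈ E := by simp [S]
  refine ⟨?_, ?_⟩
  · by_contra! hanti
    have := hP.card_le_of_antichain (S := S) fun a ha b hb hab =>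
      not_not.mp fun hne => hanti a b ((hmemS a).mp ha) ((hmemS b).mp hb) hne hab
    omega
  · set M := S.filter fun m => ∀ w ∈ S, Reaches (edgeRel E) m w → w = m
    have hMS : M ⊆ S := Finset.filter_subset _ _
    have hdom : ∀ u, (u, v) ∈ E → ∃ m ∈ M, Reaches (edgeRel E) u m := fun u hu => by
      obtain ⟨m, hmS, hum, hmax⟩ := hdag.exists_reaches_maximal (S := ↑S) ((hmemS u).mpr hu)
      exact ⟨m, Finset.mem_filter.mpr ⟨hmS, hmax⟩, hum⟩
    have hMcard : M.card ≤ t := hcard ▸ hP.card_le_of_antichain fun a ha b hb hab =>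
      ((Finset.mem_filter.mp ha).2 b (hMS hb) hab).symm
    exact ⟨pruneInto E v M, pruneInto_subset,
      fun a b => reaches_pruneInto_iff hdag (fun m hm => (hmemS m).mp (hMS hm)) hdom,
      card_filter_mem_pruneInto_le.trans hMcard⟩
end

section
/- Let G be a DAG, D a proper path of G (length ≥ 2 vertices), and 𝒫 a path cover of G such that every edge of D is contained in some path of 𝒫. Then there exists a path cover 𝒫' of G with |𝒫'| = |𝒫|, containing a path that has D as a subpath, and such that every edge of G has the same multiplicity with respect to 𝒫' as with respect to 𝒫. -/
open Finset

/-! In a DAG every walk is a path. Hence if two paths of a cover pass through a common vertex `u`,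
exchanging their tails after `u` gives two paths again, covering the same vertices and using the
same multiset of edges. Grow `D` one vertex at a time from the front: if `w :: D'` lies on a path
`p` and the edge `(x, w)` on a path `q`, then either `q = p`, and `x` precedes `w` on `p` since `p`
visits `w` only once, or exchanging the tails of `p` and `q` after `w` puts `x :: w :: D'` on one
path. -/

section Splicing

variable {V : Type*} {E : V → V → Prop}

@[simp]
lemma pathEdges_cons_cons (x y : V) (l : List V) :
    pathEdges (x :: y :: l) = (x, y) :: pathEdges (y :: l) := rfl

lemma pathEdges_append_cons (l r : List V) (u : V) :
    pathEdges (l ++ u :: r) = pathEdges (l ++ [u]) ++ pathEdges (u :: r) := by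
  induction l with
  | nil => rfl
  | cons a l ih =>
    cases l with
    | nil => rfl
    | cons b l => simpa using ih

lemma mem_pathEdges_iff_infix {x y : V} {p : List V} :
    (x, y) ∈ pathEdges p ↔ [x, y] <:+: p := by
  induction p with
  | nil => simp [pathEdges]
  | cons a t ih =>
    cases t with
    | nil => simp [pathEdges, List.infix_cons_iff]
    | cons b t => simp [ih, List.infix_cons_iff, and_comm]

lemma nodup_pathEdges {p : List V} (h : p.Nodup) : (pathEdges p).Nodup := by
  induction p with
  | nil => exact List.nodup_nil
  | cons a t ih =>
    cases t with
    | nil => exact List.nodup_nil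
    | cons b t =>
      rw [pathEdges_cons_cons, List.nodup_cons]
      exact ⟨fun hab => (List.nodup_cons.1 h).1 (List.of_mem_zip hab).1, ih h.of_cons⟩

lemma mult_pos_iff [DecidableEq V] {P : Multiset (List V)} {e : V × V} :
    0 < mult P e ↔ ∃ p ∈ P, e ∈ pathEdges p :=
  Multiset.countP_pos

lemma mult_cons_of_nodup [DecidableEq V] {p : List V} (hp : p.Nodup) (P : Multiset (List V))
    (e : V × V) : mult (p ::ₘ P) e = mult P e + (pathEdges p).count e := by
  rw [mult, Multiset.countP_cons, (nodup_pathEdges hp).count]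
  rfl

lemma mult_swap_tails [DecidableEq V] {l₁ l₂ r₁ r₂ : List V} {u : V}
    (h₁ : (l₁ ++ u :: r₁).Nodup) (h₂ : (l₂ ++ u :: r₂).Nodup)
    (h₁' : (l₁ ++ u :: r₂).Nodup) (h₂' : (l₂ ++ u :: r₁).Nodup)
    (R : Multiset (List V)) (e : V × V) :
    mult ((l₁ ++ u :: r₂) ::ₘ (l₂ ++ u :: r₁) ::ₘ R) e =
      mult ((l₁ ++ u :: r₁) ::ₘ (l₂ ++ u :: r₂) ::ₘ R) e := by
  simp only [mult_cons_of_nodup h₁, mult_cons_of_nodup h₂, mult_cons_of_nodup h₁',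
    mult_cons_of_nodup h₂', pathEdges_append_cons l₁ r₁, pathEdges_append_cons l₁ r₂,
    pathEdges_append_cons l₂ r₁, pathEdges_append_cons l₂ r₂, List.count_append]
  omega

lemma IsDAG.nodup_of_isChain (hdag : IsDAG E) {l : List V} (h : l.IsChain E) : l.Nodup := by
  refine (h.imp fun _ _ => Relation.TransGen.single).pairwise.imp ?_
  rintro a _ hab rfl
  exact hdag a hab

lemma IsDAG.isPathOn_append_cons (hdag : IsDAG E) {l r : List V} {u : V}
    (hl : (l ++ [u]).IsChain E) (hr : (u :: r).IsChain E) : IsPathOn E (l ++ u :: r) :=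
  have h : (l ++ u :: r).IsChain E := List.isChain_split.2 ⟨hl, hr⟩
  ⟨by simp, h, hdag.nodup_of_isChain h⟩

lemma IsPathCover.swap_tails (hdag : IsDAG E) {l₁ l₂ r₁ r₂ : List V} {u : V}
    {R : Multiset (List V)} (hP : IsPathCover E ((l₁ ++ u :: r₁) ::ₘ (l₂ ++ u :: r₂) ::ₘ R)) :
    IsPathCover E ((l₁ ++ u :: r₂) ::ₘ (l₂ ++ u :: r₁) ::ₘ R) := by
  obtain ⟨hpaths, hcover⟩ := hP
  have h₁ := List.isChain_split.1 (hpaths (l₁ ++ u :: r₁) (by simp)).2.1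
  have h₂ := List.isChain_split.1 (hpaths (l₂ ++ u :: r₂) (by simp)).2.1
  refine ⟨?_, fun v => ?_⟩
  · simp only [Multiset.forall_mem_cons]
    exact ⟨hdag.isPathOn_append_cons h₁.1 h₂.2, hdag.isPathOn_append_cons h₂.1 h₁.2,
      fun p hp => hpaths p (by simp [hp])⟩
  · obtain ⟨p, hp, hvp⟩ := hcover v
    by_cases hv : v ∈ l₁ ++ u :: r₁ ∨ v ∈ l₂ ++ u :: r₂
    · have : v ∈ l₁ ++ u :: r₂ ∨ v ∈ l₂ ++ u :: r₁ := by
        simp only [List.mem_append, List.mem_cons] at hv ⊢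
        tauto
      rcases this with h | h
      · exact ⟨_, by simp, h⟩
      · exact ⟨_, by simp, h⟩
    · rcases Multiset.mem_cons.1 hp with rfl | hp
      · exact absurd (.inl hvp) hv
      rcases Multiset.mem_cons.1 hp with rfl | hp
      · exact absurd (.inr hvp) hv
      exact ⟨p, by simp [hp], hvp⟩

lemma cons_infix_of_mem_pathEdges {p D : List V} {x w : V} (hp : p.Nodup)
    (hwD : w :: D <:+: p) (hxw : (x, w) ∈ pathEdges p) : x :: w :: D <:+: p := by
  obtain ⟨a, b, rfl⟩ := hwD
  obtain ⟨s, t, hst⟩ := mem_pathEdges_iff_infix.1 hxw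
  have hst' : s ++ [x] ++ w :: t = a ++ w :: (D ++ b) := by simpa using hst
  have hw : w ∉ s ++ [x] ∧ w ∉ t := by
    rw [← hst] at hp
    simpa [and_assoc] using (List.nodup_middle (l₁ := s ++ [x]).1 (by simpa using hp)).notMem
  obtain rfl : t = D ++ b := ((List.append_cons_inj_of_notMem hw.1 hw.2).1 hst').2.2
  exact ⟨s, b, by rw [← hst]; simp⟩

lemma exists_pathCover_cons_infix [DecidableEq V] (hdag : IsDAG E) {P : Multiset (List V)}
    (hP : IsPathCover E P) {p q : List V} (hp : p ∈ P) (hq : q ∈ P) {x w : V} {D : List V}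
    (hwD : w :: D <:+: p) (hxw : (x, w) ∈ pathEdges q) :
    ∃ P' : Multiset (List V), IsPathCover E P' ∧ Multiset.card P' = Multiset.card P ∧
      (∃ p' ∈ P', x :: w :: D <:+: p') ∧ ∀ e : V × V, mult P' e = mult P e := by
  by_cases hqp : q = p
  · subst hqp
    exact ⟨P, hP, rfl, ⟨q, hq, cons_infix_of_mem_pathEdges (hP.1 q hq).2.2 hwD hxw⟩, fun _ => rfl⟩
  obtain ⟨R, rfl⟩ : ∃ R, P = p ::ₘ q ::ₘ R :=
    ⟨_, by rw [Multiset.cons_erase ((Multiset.mem_erase_of_ne hqp).2 hq), Multiset.cons_erase hp]⟩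
  obtain ⟨a, b, hab⟩ := hwD
  obtain ⟨s, t, hst⟩ := mem_pathEdges_iff_infix.1 hxw
  obtain rfl : p = a ++ w :: (D ++ b) := by rw [← hab]; simp
  obtain rfl : q = (s ++ [x]) ++ w :: t := by rw [← hst]; simp
  have hP' := hP.swap_tails hdag
  refine ⟨_, hP', by simp, ⟨(s ++ [x]) ++ w :: (D ++ b), by simp, s, b, by simp⟩, ?_⟩
  exact mult_swap_tails (hP.1 _ (by simp)).2.2 (hP.1 _ (by simp)).2.2
    (hP'.1 _ (by simp)).2.2 (hP'.1 _ (by simp)).2.2 R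

theorem exists_pathCover_infix [DecidableEq V] (hdag : IsDAG E) {P : Multiset (List V)}
    (hP : IsPathCover E P) (x : V) (D : List V)
    (hD : ∀ e ∈ pathEdges (x :: D), ∃ p ∈ P, e ∈ pathEdges p) :
    ∃ P' : Multiset (List V), IsPathCover E P' ∧ Multiset.card P' = Multiset.card P ∧
      (∃ p ∈ P', x :: D <:+: p) ∧ ∀ e : V × V, mult P' e = mult P e := by
  induction D generalizing x with
  | nil =>
    obtain ⟨p, hp, hxp⟩ := hP.2 x
    exact ⟨P, hP, rfl, ⟨p, hp, (List.singleton_infix_iff x p).2 hxp⟩, fun _ => rfl⟩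
  | cons w D ih =>
    obtain ⟨P₁, hP₁, hcard₁, ⟨p, hp, hwD⟩, hmult₁⟩ := ih w fun e he => hD e (by simp [he])
    obtain ⟨q, hq, hxw⟩ : ∃ q ∈ P₁, (x, w) ∈ pathEdges q := by
      rw [← mult_pos_iff, hmult₁, mult_pos_iff]
      exact hD (x, w) (by simp)
    obtain ⟨P', hP', hcard', hxwD, hmult'⟩ := exists_pathCover_cons_infix hdag hP₁ hp hq hwD hxw
    exact ⟨P', hP', hcard'.trans hcard₁, hxwD, fun e => (hmult' e).trans (hmult₁ e)⟩

end Splicing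

theorem stmt_11_general {V : Type*} [DecidableEq V] (E : V → V → Prop) (hdag : IsDAG E)
    (D : List V) (hDpath : IsPathOn E D)
    (P : Multiset (List V)) (hP : IsPathCover E P)
    (hDP : ∀ e ∈ pathEdges D, ∃ p ∈ P, e ∈ pathEdges p) :
    ∃ P' : Multiset (List V), IsPathCover E P' ∧ Multiset.card P' = Multiset.card P ∧
      (∃ p ∈ P', D <:+: p) ∧ ∀ e : V × V, mult P' e = mult P e := by
  obtain ⟨x, D, rfl⟩ := List.exists_cons_of_ne_nil hDpath.1
  exact exists_pathCover_infix hdag hP x D hDP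

/-- splicing: given a proper path `D` each of whose edges lies on some
path of a path cover `𝒫`, there is a path cover of the same size, with the same edge
multiplicities, one of whose paths contains `D` as a subpath. -/
theorem stmt_11 {V : Type*} [DecidableEq V] (E : V → V → Prop) (hdag : IsDAG E)
    (D : List V) (hDpath : IsPathOn E D) (hDproper : 2 ≤ D.length)
    (P : Multiset (List V)) (hP : IsPathCover E P)
    (hDP : ∀ e ∈ pathEdges D, ∃ p ∈ P, e ∈ pathEdges p) :
    ∃ P' : Multiset (List V), IsPathCover E P' ∧ Multiset.card P' = Multiset.card P ∧
      (∃ p ∈ P', D <:+: p) ∧ ∀ e : V × V, mult P' e = mult P e :=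
  stmt_11_general E hdag D hDpath P hP hDP
end

section
/- For every n ≥ 1 there exists a DAG G=(V,E) with |V| = n(n+2), width n, such that every path cover of size n uses every edge of G, and |E|/|V| = 2 − 4/(n+2). Hence the factor 2 in the bound 'every DAG has a width-preserving spanning subgraph with fewer than 2|V| edges' is asymptotically tight. -/
open Finset

/-! Rank the vertices so that every edge increases the rank (`u_k ↦ 2k+1`, layer `m ↦ 2m`).
A path then meets each of the `n + 1` layers, all of size `n`, at most once, so every path cover
has at least `n` paths, and the `n` paths `v_{0,j} → u_0 → v_{1,j} → ⋯ → u_{n-1} → v_{n,j}` attain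
this. In a cover by exactly `n` paths every path meets every layer; hence no path ends at `v_{k,j}`
(`k < n`) or starts at `v_{k+1,j}`, and as `u_k` is the only out-neighbour of the first and the only
in-neighbour of the second, every edge lies on a path of the cover. -/

section Paths

variable {V : Type*} {E : V → V → Prop}

lemma gwidth_eq {k : ℕ} (hex : ∃ P, IsPathCover E P ∧ Multiset.card P = k)
    (hle : ∀ P, IsPathCover E P → k ≤ Multiset.card P) : gwidth E = k :=
  le_antisymm (Nat.sInf_le hex) (le_csInf ⟨k, hex⟩ (by rintro _ ⟨P, hP, rfl⟩; exact hle P hP))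

lemma mem_pathEdges_getElem (p : List V) (i : ℕ) (h : i + 1 < p.length) :
    (p[i], p[i + 1]) ∈ pathEdges p := by
  have hi : i < (pathEdges p).length := by
    simp only [pathEdges, List.length_zip, List.length_tail]
    omega
  exact List.mem_iff_getElem.2 ⟨i, hi, by simp [pathEdges]⟩

variable {f : V → ℕ} (hf : ∀ ⦃a b⦄, E a b → f a < f b) {p : List V}
include hf

lemma isDAG_of_rank : IsDAG E := fun v hv => by
  have : Relation.TransGen (· < ·) (f v) (f v) := Relation.TransGen.lift f hf _ _ hv
  rw [Relation.transGen_eq_self] at this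
  exact lt_irrefl _ this

lemma List.IsChain.pairwise_rank_lt (hp : p.IsChain E) : p.Pairwise (fun a b => f a < f b) :=
  List.isChain_iff_pairwise.1 (hp.imp hf)

lemma isPathOn_of_rank (hne : p ≠ []) (hp : p.IsChain E) : IsPathOn E p :=
  ⟨hne, hp, (hp.pairwise_rank_lt hf).imp fun h heq => h.ne (congrArg f heq)⟩

lemma List.IsChain.rank_lt_rank (hp : p.IsChain E) {i j : ℕ} (hij : i < j) (hj : j < p.length) :
    f p[i] < f p[j] :=
  List.pairwise_iff_getElem.1 (hp.pairwise_rank_lt hf) i j (hij.trans hj) hj hij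

lemma List.IsChain.eq_of_rank_eq (hp : p.IsChain E) {a b : V} (ha : a ∈ p) (hb : b ∈ p)
    (hab : f a = f b) : a = b := by
  obtain ⟨i, hi, rfl⟩ := List.mem_iff_getElem.1 ha
  obtain ⟨j, hj, rfl⟩ := List.mem_iff_getElem.1 hb
  rcases lt_trichotomy i j with h | rfl | h
  · exact absurd hab (hp.rank_lt_rank hf h hj).ne
  · rfl
  · exact absurd hab (hp.rank_lt_rank hf h hi).ne'

lemma List.IsChain.exists_succ (hp : p.IsChain E) {a b : V} (ha : a ∈ p) (hb : b ∈ p)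
    (hab : f a < f b) : ∃ w, E a w ∧ (a, w) ∈ pathEdges p := by
  obtain ⟨i, hi, rfl⟩ := List.mem_iff_getElem.1 ha
  obtain ⟨j, hj, rfl⟩ := List.mem_iff_getElem.1 hb
  have hij : i < j := by
    by_contra! h
    rcases h.lt_or_eq with h | rfl
    · exact (hp.rank_lt_rank hf h hi).not_gt hab
    · exact hab.false
  exact ⟨p[i + 1], List.isChain_iff_getElem.1 hp i (by omega),
    mem_pathEdges_getElem p i (by omega)⟩

lemma List.IsChain.exists_pred (hp : p.IsChain E) {a b : V} (ha : a ∈ p) (hb : b ∈ p)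
    (hba : f b < f a) : ∃ w, E w a ∧ (w, a) ∈ pathEdges p := by
  obtain ⟨i, hi, rfl⟩ := List.mem_iff_getElem.1 ha
  obtain ⟨j, hj, rfl⟩ := List.mem_iff_getElem.1 hb
  obtain ⟨k, rfl⟩ : ∃ k, i = k + 1 := by
    refine Nat.exists_eq_add_one.2 (Nat.pos_of_ne_zero fun h0 => ?_)
    subst h0
    rcases Nat.eq_zero_or_pos j with rfl | hj0
    · exact hba.false
    · exact (hp.rank_lt_rank hf hj0 hj).not_gt hba
  exact ⟨p[k], List.isChain_iff_getElem.1 hp k hi, mem_pathEdges_getElem p k hi⟩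

end Paths

section Counting

variable {V : Type*} {L : Finset V} {P : Multiset (List V)}
  (hL : ∀ p ∈ P, ∀ a ∈ L, ∀ b ∈ L, a ∈ p → b ∈ p → a = b) (hcov : ∀ v ∈ L, ∃ p ∈ P, v ∈ p)
include hL hcov

open Classical in
lemma card_le_countP_meets : #L ≤ P.countP (fun p => ∃ v ∈ L, v ∈ p) := by
  classical
  set M := (P.filter fun p => ∃ v ∈ L, v ∈ p).toFinset
  have hsub : L ⊆ M.biUnion fun p => L.filter (· ∈ p) := by
    intro v hv
    obtain ⟨p, hp, hvp⟩ := hcov v hv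
    exact Finset.mem_biUnion.2 ⟨p, by simpa [M, hp] using ⟨v, hv, hvp⟩, by simp [hv, hvp]⟩
  calc #L ≤ #(M.biUnion fun p => L.filter (· ∈ p)) := Finset.card_le_card hsub
    _ ≤ #M * 1 := by
      refine Finset.card_biUnion_le_card_mul _ _ _ fun p hp => Finset.card_le_one.2 ?_
      simp only [M, Multiset.mem_toFinset, Multiset.mem_filter, Finset.mem_filter] at hp ⊢
      exact fun a ha b hb => hL p hp.1 a ha.1 b hb.1 ha.2 hb.2
    _ ≤ P.countP (fun p => ∃ v ∈ L, v ∈ p) := by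
      rw [mul_one, Multiset.countP_eq_card_filter]
      exact Multiset.toFinset_card_le _

lemma card_le_card_of_meets_at_most_once : #L ≤ Multiset.card P := by
  classical
  exact (card_le_countP_meets hL hcov).trans (Multiset.countP_le_card _ _)

lemma meets_of_card_eq (hcard : Multiset.card P = #L) : ∀ p ∈ P, ∃ v ∈ L, v ∈ p := by
  classical
  exact Multiset.countP_eq_card.1
    (le_antisymm (Multiset.countP_le_card _ _) (hcard ▸ card_le_countP_meets hL hcov))

end Counting

namespace WidthTight

variable {n : ℕ}

/- `Sum.inl k` is the vertex `u_k`, and `Sum.inr (m, j)` is the `j`-th vertex `v_{m,j}` of layer `m`.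
The edges are `v_{k,j} → u_k → v_{k+1,j}`. -/
abbrev Vertex (n : ℕ) := Fin n ⊕ (Fin (n + 1) × Fin n)

def edges (n : ℕ) : Finset (Vertex n × Vertex n) :=
  (univ.image fun q : Fin n × Fin n => ((Sum.inr (q.1.castSucc, q.2) : Vertex n), Sum.inl q.1)) ∪
  (univ.image fun q : Fin n × Fin n => ((Sum.inl q.1 : Vertex n), Sum.inr (q.1.succ, q.2)))

def rank : Vertex n → ℕ
  | Sum.inl k => 2 * k + 1
  | Sum.inr (m, _) => 2 * m

lemma mem_edges {a b : Vertex n} : (a, b) ∈ edges n ↔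
    (∃ k j : Fin n, a = Sum.inr (k.castSucc, j) ∧ b = Sum.inl k) ∨
    (∃ k j : Fin n, a = Sum.inl k ∧ b = Sum.inr (k.succ, j)) := by
  simp only [edges, Finset.mem_union, Finset.mem_image, Finset.mem_univ, true_and, Prod.ext_iff,
    Prod.exists, eq_comm]

lemma rank_lt_rank ⦃a b : Vertex n⦄ (h : edgeRel (edges n) a b) : rank a < rank b := by
  rcases mem_edges.1 h with ⟨k, j, rfl, rfl⟩ | ⟨k, j, rfl, rfl⟩ <;> simp only [rank, Fin.val_castSucc, Fin.val_succ] <;> omega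

lemma card_vertex : Fintype.card (Vertex n) = n * (n + 2) := by
  simp only [Fintype.card_sum, Fintype.card_prod, Fintype.card_fin]
  ring

lemma card_edges : (edges n).card = 2 * n ^ 2 := by
  rw [edges, Finset.card_union_of_disjoint, Finset.card_image_of_injective,
    Finset.card_image_of_injective]
  · simp only [Finset.card_univ, Fintype.card_prod, Fintype.card_fin]
    ring
  · rintro ⟨k, j⟩ ⟨k', j'⟩ h
    simp_all
  · rintro ⟨k, j⟩ ⟨k', j'⟩ h
    simp_all
  · simp [Finset.disjoint_left]

lemma isDAG_edges : IsDAG (edgeRel (edges n)) := isDAG_of_rank rank_lt_rank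

def layer (m : Fin (n + 1)) : Finset (Vertex n) := univ.image fun j => Sum.inr (m, j)

lemma card_layer (m : Fin (n + 1)) : #(layer m) = n := by
  rw [layer, Finset.card_image_of_injective _ fun j j' h => by simpa using h]
  simp

lemma rank_of_mem_layer {m : Fin (n + 1)} {a : Vertex n} (ha : a ∈ layer m) : rank a = 2 * m := by
  obtain ⟨j, -, rfl⟩ := Finset.mem_image.1 ha
  rfl

lemma eq_of_mem_layer {p : List (Vertex n)} (hp : p.IsChain (edgeRel (edges n))) {m : Fin (n + 1)}
    {a b : Vertex n} (ha : a ∈ layer m) (hb : b ∈ layer m) (hap : a ∈ p) (hbp : b ∈ p) : a = b :=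
  hp.eq_of_rank_eq rank_lt_rank hap hbp ((rank_of_mem_layer ha).trans (rank_of_mem_layer hb).symm)

variable {P : Multiset (List (Vertex n))}

lemma le_card_of_isPathCover (hP : IsPathCover (edgeRel (edges n)) P) : n ≤ Multiset.card P :=
  (card_layer 0).symm.le.trans <| card_le_card_of_meets_at_most_once
    (fun p hp _ ha _ hb => eq_of_mem_layer (hP.1 p hp).2.1 ha hb) fun v _ => hP.2 v

lemma meets_layer (hP : IsPathCover (edgeRel (edges n)) P) (hcard : Multiset.card P = n)
    (m : Fin (n + 1)) : ∀ p ∈ P, ∃ v ∈ layer m, v ∈ p :=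
  meets_of_card_eq (fun p hp _ ha _ hb => eq_of_mem_layer (hP.1 p hp).2.1 ha hb)
    (fun v _ => hP.2 v) (hcard.trans (card_layer m).symm)

/-- The vertex of rank `i` on the path `v_{0,j} → u_0 → v_{1,j} → ⋯ → u_{n-1} → v_{n,j}`. -/
def pathVertex (j : Fin n) (i : Fin (2 * n + 1)) : Vertex n :=
  if h : i.val % 2 = 0 then Sum.inr (⟨i / 2, by omega⟩, j) else Sum.inl ⟨i / 2, by omega⟩

def path (j : Fin n) : List (Vertex n) := List.ofFn (pathVertex j)

lemma isPathOn_path (j : Fin n) : IsPathOn (edgeRel (edges n)) (path j) := by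
  refine isPathOn_of_rank rank_lt_rank (p := path j) (by simp [path]) ?_
  refine List.isChain_ofFn.2 fun i hi => mem_edges.2 ?_
  dsimp only [pathVertex]
  split_ifs with h h'
  · omega
  · exact Or.inl ⟨⟨i / 2, by omega⟩, j, by simp, by simp [Fin.ext_iff]; omega⟩
  · exact Or.inr ⟨⟨i / 2, by omega⟩, j, rfl, by simp [Fin.ext_iff]; omega⟩
  · omega

def pathCover (n : ℕ) : Multiset (List (Vertex n)) := univ.val.map path

lemma isPathCover_pathCover : IsPathCover (edgeRel (edges n)) (pathCover n) := by
  refine ⟨by simpa [pathCover] using isPathOn_path, ?_⟩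
  rintro (k | ⟨m, j⟩)
  · refine ⟨path k, by simp [pathCover], List.mem_ofFn.2 ⟨⟨2 * k + 1, by omega⟩, ?_⟩⟩
    simp only [pathVertex, Nat.add_mod, Nat.mul_mod_right, Nat.mod_succ, zero_add, one_ne_zero,
      ↓reduceDIte, Sum.inl.injEq, Fin.ext_iff]
    omega
  · refine ⟨path j, by simp [pathCover], List.mem_ofFn.2 ⟨⟨2 * m, by omega⟩, ?_⟩⟩
    simp [pathVertex]

lemma gwidth_edges : gwidth (edgeRel (edges n)) = n :=
  gwidth_eq ⟨pathCover n, isPathCover_pathCover, by simp [pathCover]⟩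
    fun _ => le_card_of_isPathCover

lemma eq_of_edge_from_layer {k j : Fin n} {w : Vertex n}
    (h : edgeRel (edges n) (Sum.inr (k.castSucc, j)) w) : w = Sum.inl k := by
  rcases mem_edges.1 h with ⟨k', j', h', rfl⟩ | ⟨k', j', h', -⟩ <;> simp_all

lemma eq_of_edge_to_layer {k j : Fin n} {w : Vertex n}
    (h : edgeRel (edges n) w (Sum.inr (k.succ, j))) : w = Sum.inl k := by
  rcases mem_edges.1 h with ⟨k', j', -, h'⟩ | ⟨k', j', rfl, h'⟩ <;> simp_all

lemma mem_pathEdges_of_card_eq (hP : IsPathCover (edgeRel (edges n)) P)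
    (hcard : Multiset.card P = n) : ∀ e ∈ edges n, ∃ p ∈ P, e ∈ pathEdges p := by
  rintro ⟨a, b⟩ he
  rcases mem_edges.1 he with ⟨k, j, rfl, rfl⟩ | ⟨k, j, rfl, rfl⟩
  · obtain ⟨p, hp, hap⟩ := hP.2 (Sum.inr (k.castSucc, j))
    obtain ⟨c, hc, hcp⟩ := meets_layer hP hcard k.succ p hp
    obtain ⟨w, hw, hwp⟩ := (hP.1 p hp).2.1.exists_succ rank_lt_rank hap hcp
      (by rw [rank_of_mem_layer hc]; simp [rank])
    exact ⟨p, hp, eq_of_edge_from_layer hw ▸ hwp⟩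
  · obtain ⟨p, hp, hbp⟩ := hP.2 (Sum.inr (k.succ, j))
    obtain ⟨c, hc, hcp⟩ := meets_layer hP hcard k.castSucc p hp
    obtain ⟨w, hw, hwp⟩ := (hP.1 p hp).2.1.exists_pred rank_lt_rank hbp hcp
      (by rw [rank_of_mem_layer hc]; simp [rank])
    exact ⟨p, hp, eq_of_edge_to_layer hw ▸ hwp⟩

end WidthTight

theorem stmt_14_general (n : ℕ) :
    ∃ (V : Type) (_ : Fintype V) (_ : DecidableEq V) (E : Finset (V × V)),
      Fintype.card V = n * (n + 2) ∧ IsDAG (edgeRel E) ∧ gwidth (edgeRel E) = n ∧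
      (∀ P : Multiset (List V), IsPathCover (edgeRel E) P → Multiset.card P = n →
        ∀ e ∈ E, ∃ p ∈ P, e ∈ pathEdges p) ∧
      E.card = 2 * n ^ 2 ∧
      (E.card : ℚ) / (Fintype.card V : ℚ) = 2 - 4 / ((n : ℚ) + 2) := by
  refine ⟨WidthTight.Vertex n, inferInstance, inferInstance, WidthTight.edges n,
    WidthTight.card_vertex, WidthTight.isDAG_edges, WidthTight.gwidth_edges,
    fun _ => WidthTight.mem_pathEdges_of_card_eq, WidthTight.card_edges, ?_⟩
  rw [WidthTight.card_edges, WidthTight.card_vertex]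
  rcases eq_or_ne n 0 with rfl | hn
  · norm_num
  · push_cast
    field_simp
    ring

/-- for every `n ≥ 1` there is a DAG with `n(n+2)` vertices, width `n`,
in which every path cover of size `n` uses every edge, and `|E|/|V| = 2 - 4/(n+2)`
(indeed `|E| = 2n²`); hence the factor 2 in the sparsification bound is tight. -/
theorem stmt_14 (n : ℕ) (hn : 1 ≤ n) :
    ∃ (V : Type) (_ : Fintype V) (_ : DecidableEq V) (E : Finset (V × V)),
      Fintype.card V = n * (n + 2) ∧ IsDAG (edgeRel E) ∧ gwidth (edgeRel E) = n ∧
      (∀ P : Multiset (List V), IsPathCover (edgeRel E) P → Multiset.card P = n →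
        ∀ e ∈ E, ∃ p ∈ P, e ∈ pathEdges p) ∧
      E.card = 2 * n ^ 2 ∧
      (E.card : ℚ) / (Fintype.card V : ℚ) = 2 - 4 / ((n : ℚ) + 2) :=
  stmt_14_general n
end

section
/- Let 𝒫 be a path cover of a DAG G, and let C be an undirected cycle in the support graph whose edges are partitioned into forward edges F and backward edges B (with respect to a fixed orientation of C), all with positive multiplicity in 𝒫. Define Φ(𝒫) = Σ_{e} μ_𝒫(e)². If a new path cover 𝒫' is obtained by increasing the multiplicity of each edge of F by one and decreasing the multiplicity of each edge of B by one, and Σ_{e∈F} μ_𝒫(e) ≥ Σ_{e∈B} μ_𝒫(e), then Φ(𝒫') − Φ(𝒫) ≥ |C|. -/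
open Finset

/-- splicing along a cycle whose edges split into forward edges `F` and
backward edges `B`, all of positive multiplicity, increasing multiplicities on `F` and
decreasing them on `B`, increases `Φ = Σ μ²` by at least `|C| = |F| + |B|`, provided
`Σ_F μ ≥ Σ_B μ`. -/
theorem stmt_15 {V : Type*} [Fintype V] [DecidableEq V] (P P' : Multiset (List V))
    (F B : Finset (V × V)) (hFB : Disjoint F B)
    (hpos : ∀ e ∈ F ∪ B, 0 < mult P e)
    (hF : ∀ e ∈ F, mult P' e = mult P e + 1)
    (hB : ∀ e ∈ B, mult P' e = mult P e - 1)
    (hrest : ∀ e : V × V, e ∉ F ∪ B → mult P' e = mult P e)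
    (hsum : ∑ e ∈ B, mult P e ≤ ∑ e ∈ F, mult P e) :
    (F.card + B.card : ℤ) ≤
      (∑ e : V × V, (mult P' e : ℤ) ^ 2) - ∑ e : V × V, (mult P e : ℤ) ^ 2 := by

  have key : (∑ e : V × V, (mult P' e : ℤ) ^ 2) - ∑ e : V × V, (mult P e : ℤ) ^ 2
      = ∑ e ∈ F ∪ B, ((mult P' e : ℤ) ^ 2 - (mult P e : ℤ) ^ 2) := by
    rw [← Finset.sum_sub_distrib]
    refine (Finset.sum_subset (Finset.subset_univ (F ∪ B)) ?_).symm
    intro x _ hx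
    rw [hrest x hx]; ring
  have hFsum : ∑ e ∈ F, ((mult P' e : ℤ) ^ 2 - (mult P e : ℤ) ^ 2)
      = ∑ e ∈ F, (2 * (mult P e : ℤ) + 1) := by
    refine Finset.sum_congr rfl fun e he => ?_
    rw [hF e he]; push_cast; ring
  have hBsum : ∑ e ∈ B, ((mult P' e : ℤ) ^ 2 - (mult P e : ℤ) ^ 2)
      = ∑ e ∈ B, (-(2 * (mult P e : ℤ)) + 1) := by
    refine Finset.sum_congr rfl fun e he => ?_
    have h1 : 1 ≤ mult P e := hpos e (Finset.mem_union_right F he)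
    rw [hB e he, Nat.cast_sub h1]; push_cast; ring
  rw [key, Finset.sum_union hFB, hFsum, hBsum,
    Finset.sum_add_distrib, Finset.sum_add_distrib,
    Finset.sum_const, Finset.sum_const]
  have hsum' : (∑ e ∈ B, (mult P e : ℤ)) ≤ ∑ e ∈ F, (mult P e : ℤ) := by
    exact_mod_cast hsum
  simp only [nsmul_eq_mul, mul_one, Finset.sum_neg_distrib, ← Finset.mul_sum]
  linarith
end

section
/- Let G' be an undirected graph on vertex set V, where each vertex is colored blue if its degree is at most 2 and red otherwise, and each edge is blue if both endpoints are blue, red if both are red, and purple otherwise. If G' contains no cycle consisting only of red edges, then the number of edges of G' is less than 2|V|. -/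
open Finset

/-!
With `n_r` red and `n_b` blue vertices: the red vertices span a forest, so there are fewer
than `n_r` red edges. Every other edge has a blue endpoint, and blue vertices have degree at
most `2`, so there are at most `2 n_b` such edges; hence `|E| < n_r + 2 n_b ≤ 2|V|`. If there
are no red vertices, all degrees are at most `2` and `|E| ≤ |V|`.
-/

namespace SimpleGraph

variable {V : Type*} {G : SimpleGraph V}

theorem IsAcyclic.card_edgeFinset_lt [Fintype V] [Nonempty V] [Fintype G.edgeSet]
    (hG : G.IsAcyclic) : #G.edgeFinset < Fintype.card V := by
  classical
  obtain ⟨T, hGT, -, hT⟩ := connected_top.exists_isTree_le_of_le_of_isAcyclic le_top hG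
  have hT_card := hT.card_edgeFinset
  have hGT_card : #G.edgeFinset ≤ #T.edgeFinset := card_le_card (edgeFinset_mono hGT)
  omega

theorem isAcyclic_induce_of_not_exists_isCycle {s : Set V}
    (h : ¬ ∃ (v : V) (w : G.Walk v v), w.IsCycle ∧ ∀ e ∈ w.edges, ∀ x ∈ e, x ∈ s) :
    (G.induce s).IsAcyclic := by
  intro v c hc
  let φ := Embedding.induce (G := G) s
  refine h ⟨v, c.map φ.toHom, hc.map φ.injective, fun e he x hx => ?_⟩
  obtain ⟨e', -, rfl⟩ := List.mem_map.mp (Walk.edges_map φ.toHom c ▸ he)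
  obtain ⟨a, -, rfl⟩ := Sym2.mem_map.mp hx
  exact a.2

variable [Fintype V] [DecidableEq V] [DecidableRel G.Adj]

theorem card_filter_edgeFinset_forall_mem_lt {s : Finset V} (hs : s.Nonempty)
    (hG : (G.induce (s : Set V)).IsAcyclic) :
    #{e ∈ G.edgeFinset | ∀ x ∈ e, x ∈ s} < #s := by
  have : Nonempty (s : Set V) := hs.to_subtype
  have hsub : {e ∈ G.edgeFinset | ∀ x ∈ e, x ∈ s} ⊆
      (G.induce (s : Set V)).edgeFinset.image (Sym2.map (↑)) := by
    intro e he
    rw [mem_filter, mem_edgeFinset] at he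
    induction e using Sym2.ind with
    | _ u v =>
      refine mem_image.2 ⟨s(⟨u, he.2 u (by simp)⟩, ⟨v, he.2 v (by simp)⟩), ?_, rfl⟩
      simpa using he.1
  calc #{e ∈ G.edgeFinset | ∀ x ∈ e, x ∈ s}
      ≤ #(G.induce (s : Set V)).edgeFinset := (card_le_card hsub).trans card_image_le
    _ < Fintype.card (s : Set V) := hG.card_edgeFinset_lt
    _ = #s := by simp

theorem card_filter_edgeFinset_exists_mem_le_sum_degree (s : Finset V) :
    #{e ∈ G.edgeFinset | ∃ x ∈ e, x ∈ s} ≤ ∑ v ∈ s, G.degree v := by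
  have hsub : {e ∈ G.edgeFinset | ∃ x ∈ e, x ∈ s} ⊆
      s.biUnion fun v => G.incidenceFinset v := by
    intro e he
    rw [mem_filter, mem_edgeFinset] at he
    obtain ⟨he, x, hxe, hxs⟩ := he
    exact mem_biUnion.2 ⟨x, hxs, (mem_incidenceFinset G x e).2 ⟨he, hxe⟩⟩
  calc #{e ∈ G.edgeFinset | ∃ x ∈ e, x ∈ s}
      ≤ ∑ v ∈ s, #(G.incidenceFinset v) := (card_le_card hsub).trans card_biUnion_le
    _ = ∑ v ∈ s, G.degree v := by simp_rw [card_incidenceFinset_eq_degree]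

end SimpleGraph

/-- color vertices blue (degree ≤ 2) or red, and edges accordingly; if
an undirected graph has no cycle consisting only of red edges, then it has fewer than
`2|V|` edges. -/
theorem stmt_16 {V : Type*} [Fintype V] [Nonempty V] (G : SimpleGraph V)
    [DecidableRel G.Adj]
    (hnored : ¬ ∃ (v : V) (w : G.Walk v v), w.IsCycle ∧
      ∀ e ∈ w.edges, ∀ x ∈ e, 2 < G.degree x) :
    G.edgeFinset.card < 2 * Fintype.card V := by
  classical
  set red : Finset V := {v | 2 < G.degree v}
  have hdeg_blue : ∀ v ∈ redᶜ, G.degree v ≤ 2 := by simp [red]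
  have hcard : #red + #redᶜ = Fintype.card V := card_add_card_compl red
  obtain hred | hred := red.eq_empty_or_nonempty
  · have hsum : ∑ v, G.degree v ≤ ∑ _v : V, 2 :=
      sum_le_sum fun v _ => hdeg_blue v (by simp [hred])
    rw [G.sum_degrees_eq_twice_card_edges, sum_const, card_univ, smul_eq_mul] at hsum
    have := Fintype.card_pos (α := V)
    omega
  · have hforest : (G.induce (red : Set V)).IsAcyclic :=
      SimpleGraph.isAcyclic_induce_of_not_exists_isCycle (by simpa [red] using hnored)
    have hred_edges := SimpleGraph.card_filter_edgeFinset_forall_mem_lt hred hforest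
    have hblue_edges : #{e ∈ G.edgeFinset | ∃ x ∈ e, x ∈ redᶜ} ≤ 2 * #redᶜ :=
      (SimpleGraph.card_filter_edgeFinset_exists_mem_le_sum_degree redᶜ).trans <|
        (sum_le_sum hdeg_blue).trans_eq (by rw [sum_const, smul_eq_mul, mul_comm])
    have hsplit :=
      card_filter_add_card_filter_not (s := G.edgeFinset) (fun e => ∀ x ∈ e, x ∈ red)
    simp only [not_forall, exists_prop, ← mem_compl] at hsplit
    omega
end

section
/- In the algorithm's level assignment for the minimum flow f*_i of 𝒢_i satisfying Invariants A and B, the first layered cut L^{≤0}_i (all vertices of level at most 0, together with s) is a maximum one-way st-cut, i.e., its demand equals |f*_i|. -/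
open Finset

section Aux

variable {W : Type*} [Fintype W]

open Classical in
lemma cutFlow_eq_flowSize_s17 (N : FlowNet W) (f : W × W → ℕ) (hf : IsFlow N f)
    (S : Set W) (hs : N.s ∈ S) (ht : N.t ∉ S) :
    cutFlow N S f = flowSize N f := by
  classical
  set S' : Finset W := univ.filter (· ∈ S) with hS'
  set T' : Finset W := univ.filter (· ∉ S) with hT'
  have hmemS : ∀ v, v ∈ S' ↔ v ∈ S := by simp [hS']
  -- flowSize as a sum over S'
  have hsum : ∑ v ∈ S', ((∑ u : W, (f (v, u) : ℤ)) - ∑ u : W, (f (u, v) : ℤ))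
      = flowSize N f := by
    rw [Finset.sum_eq_single_of_mem N.s ((hmemS _).2 hs)]
    · rfl
    · intro v hv hvs
      have hvt : v ≠ N.t := by rintro rfl; exact ht ((hmemS _).1 hv)
      have h := hf.2.2 v hvs hvt
      have h' : (∑ u : W, (f (u, v) : ℤ)) = ∑ u : W, (f (v, u) : ℤ) := by
        exact_mod_cast h
      rw [h']; ring
  -- split the double sums
  have hsplit : ∀ g : W → W → ℤ, (∑ v ∈ S', ∑ u : W, g v u)
      = (∑ v ∈ S', ∑ u ∈ S', g v u) + ∑ v ∈ S', ∑ u ∈ T', g v u := by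
    intro g
    rw [← Finset.sum_add_distrib]
    refine Finset.sum_congr rfl fun v _ => ?_
    exact (Finset.sum_filter_add_sum_filter_not univ (· ∈ S) (g v)).symm
  -- the S'×S' parts cancel
  have hcomm : (∑ v ∈ S', ∑ u ∈ S', (f (v, u) : ℤ))
      = ∑ v ∈ S', ∑ u ∈ S', (f (u, v) : ℤ) := Finset.sum_comm
  -- relate boundary sums to sums over E
  have hbd : ∀ (A B : Finset W) (hA : ∀ a, a ∈ A ↔ a ∈ S) (hB : ∀ b, b ∈ B ↔ b ∉ S),
      (∑ v ∈ A, ∑ u ∈ B, (f (v, u) : ℤ))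
        = ∑ e ∈ N.E.filter (fun e => e.1 ∈ S ∧ e.2 ∉ S), (f e : ℤ) := by
    intro A B hA hB
    rw [← Finset.sum_product']
    refine (Finset.sum_subset ?_ ?_).symm
    · intro p hp
      simp only [Finset.mem_filter] at hp
      simp [Finset.mem_product, hA, hB, hp.2.1, hp.2.2]
    · intro p hp hp'
      simp only [Finset.mem_product, hA, hB] at hp
      have : p ∉ N.E := by
        intro hpE
        exact hp' (Finset.mem_filter.mpr ⟨hpE, hp.1, hp.2⟩)
      simp [hf.1 p this]
  have hbd2 : (∑ v ∈ S', ∑ u ∈ T', (f (u, v) : ℤ))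
      = ∑ e ∈ N.E.filter (fun e => e.1 ∉ S ∧ e.2 ∈ S), (f e : ℤ) := by
    rw [Finset.sum_comm, ← Finset.sum_product']
    refine (Finset.sum_subset ?_ ?_).symm
    · intro p hp
      simp only [Finset.mem_filter] at hp
      simp [Finset.mem_product, hS', hT', hp.2.1, hp.2.2]
    · intro p hp hp'
      simp only [Finset.mem_product, hS', hT', Finset.mem_filter, Finset.mem_univ,
        true_and] at hp
      have : p ∉ N.E := by
        intro hpE
        exact hp' (Finset.mem_filter.mpr ⟨hpE, hp.1, hp.2⟩)
      simp [hf.1 p this]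
  have h1 := hsplit (fun v u => (f (v, u) : ℤ))
  have h2 := hsplit (fun v u => (f (u, v) : ℤ))
  have hP := hbd S' T' hmemS (by simp [hT'])
  rw [← hsum, Finset.sum_sub_distrib, h1, h2, hP, hcomm, hbd2]
  unfold cutFlow
  ring

open Classical in
lemma cutDemand_le_cutFlow (N : FlowNet W) (f : W × W → ℕ) (hf : IsFlow N f)
    (S : Set W) (how : IsOwCut N S) :
    (cutDemand N S : ℤ) ≤ cutFlow N S f := by
  classical
  unfold cutDemand cutFlow
  have hempty : N.E.filter (fun e => e.1 ∉ S ∧ e.2 ∈ S) = ∅ := by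
    refine Finset.filter_false_of_mem fun e he => ?_
    rintro ⟨h1, h2⟩
    exact how.2 e he h1 h2
  rw [hempty]
  simp only [Finset.sum_empty, sub_zero]
  push_cast
  refine Finset.sum_le_sum fun e he => ?_
  exact_mod_cast hf.2.1 e (Finset.mem_filter.mp he).1

end Aux

/-- under Invariants A and B, the first layered cut `L^{≤0}` is a
maximum one-way st-cut of the flow reduction, of demand `|f*|`. -/
theorem stmt_17 {V : Type*} [Fintype V] [DecidableEq V] (E : Finset (V × V))
    (f : FR V × FR V → ℕ) (hf : IsFlow (redNet E) f)
    (hmin : ∀ g, IsFlow (redNet E) g → flowSize (redNet E) f ≤ flowSize (redNet E) g)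
    (ℓ : FR V → ℤ) (hnn : ∀ v : V, 0 ≤ ℓ (vinF v) ∧ 0 ≤ ℓ (voutF v))
    (invA : ∀ x y : FR V, ResidualEdge (redNet E) f x y →
      x ≠ fsrc → x ≠ fsnk → y ≠ fsrc → y ≠ fsnk → ℓ y ≤ ℓ x)
    (invB1 : ∀ v : V, 0 < f (voutF v, fsnk) →
      f (voutF v, fsnk) = 1 ∧ ℓ (vinF v) < ℓ (voutF v))
    (invB2 : ∀ v : V, 0 < f (fsrc, vinF v) → ℓ (vinF v) = 0) :
    IsOwCut (redNet E) (layerCut ℓ 0) ∧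
    (cutDemand (redNet E) (layerCut ℓ 0) : ℤ) = flowSize (redNet E) f ∧
    ∀ S, IsOwCut (redNet E) S →
      cutDemand (redNet E) S ≤ cutDemand (redNet E) (layerCut ℓ 0) := by
  classical
  set S : Set (FR V) := layerCut ℓ 0 with hSdef
  have hsrc : (fsrc : FR V) ∈ S := Or.inl rfl
  have hsnk : (fsnk : FR V) ∉ S := by
    rintro (h | ⟨⟨v, h | h⟩, -⟩) <;> simp [fsrc, fsnk, vinF, voutF] at h
  have hvin : ∀ v : V, vinF v ∈ S ↔ ℓ (vinF v) ≤ 0 := by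
    intro v
    constructor
    · rintro (h | ⟨-, h⟩)
      · simp [vinF, fsrc] at h
      · exact h
    · intro h; exact Or.inr ⟨⟨v, Or.inl rfl⟩, h⟩
  have hvout : ∀ v : V, voutF v ∈ S ↔ ℓ (voutF v) ≤ 0 := by
    intro v
    constructor
    · rintro (h | ⟨-, h⟩)
      · simp [voutF, fsrc] at h
      · exact h
    · intro h; exact Or.inr ⟨⟨v, Or.inr rfl⟩, h⟩
  have hE : ∀ p : FR V × FR V, p ∈ (redNet E).E ↔
      (∃ v : V, p = (fsrc, vinF v)) ∨ (∃ v : V, p = (voutF v, fsnk)) ∨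
      (∃ v : V, p = (vinF v, voutF v)) ∨ (∃ e ∈ E, p = (voutF e.1, vinF e.2)) := by
    intro p
    simp only [redNet, Finset.mem_union, Finset.mem_image, Finset.mem_univ, true_and,
      or_assoc]
    constructor
    · rintro (⟨v, h⟩ | ⟨v, h⟩ | ⟨v, h⟩ | ⟨e, he, h⟩)
      · exact Or.inl ⟨v, h.symm⟩
      · exact Or.inr (Or.inl ⟨v, h.symm⟩)
      · exact Or.inr (Or.inr (Or.inl ⟨v, h.symm⟩))
      · exact Or.inr (Or.inr (Or.inr ⟨e, he, h.symm⟩))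
    · rintro (⟨v, h⟩ | ⟨v, h⟩ | ⟨v, h⟩ | ⟨e, he, h⟩)
      · exact Or.inl ⟨v, h.symm⟩
      · exact Or.inr (Or.inl ⟨v, h.symm⟩)
      · exact Or.inr (Or.inr (Or.inl ⟨v, h.symm⟩))
      · exact Or.inr (Or.inr (Or.inr ⟨e, he, h.symm⟩))
  have hne : ∀ v : V, vinF v ≠ (fsrc : FR V) ∧ vinF v ≠ (fsnk : FR V) ∧
      voutF v ≠ (fsrc : FR V) ∧ voutF v ≠ (fsnk : FR V) := by
    intro v
    refine ⟨?_, ?_, ?_, ?_⟩ <;> simp [vinF, voutF, fsrc, fsnk]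
  -- residual consequences of Invariant A
  have hA1 : ∀ v : V, ℓ (vinF v) ≤ ℓ (voutF v) := by
    intro v
    exact invA _ _ (Or.inl ((hE _).mpr (Or.inr (Or.inr (Or.inl ⟨v, rfl⟩)))))
      (hne v).2.2.1 (hne v).2.2.2 (hne v).1 (hne v).2.1
  have hA2 : ∀ a : V × V, a ∈ E → ℓ (voutF a.1) ≤ ℓ (vinF a.2) := by
    intro a ha
    exact invA _ _ (Or.inl ((hE _).mpr (Or.inr (Or.inr (Or.inr ⟨a, ha, rfl⟩)))))
      (hne a.2).1 (hne a.2).2.1 (hne a.1).2.2.1 (hne a.1).2.2.2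
  -- one-way cut
  have how : IsOwCut (redNet E) S := by
    refine ⟨⟨hsrc, hsnk⟩, ?_⟩
    intro e he h1
    rcases (hE e).mp he with ⟨v, rfl⟩ | ⟨v, rfl⟩ | ⟨v, rfl⟩ | ⟨a, ha, rfl⟩
    · exact absurd hsrc h1
    · exact hsnk
    · intro h2
      exact h1 ((hvin v).mpr (le_trans (hA1 v) ((hvout v).mp h2)))
    · intro h2
      exact h1 ((hvout a.1).mpr (le_trans (hA2 a ha) ((hvin a.2).mp h2)))
  -- on crossing edges, flow equals demand
  have hfd : ∀ e ∈ (redNet E).E, e.1 ∈ S → e.2 ∉ S → f e = (redNet E).d e := by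
    intro e he h1 h2
    rcases (hE e).mp he with ⟨v, rfl⟩ | ⟨v, rfl⟩ | ⟨v, rfl⟩ | ⟨a, ha, rfl⟩
    · -- (fsrc, vin v), not in S so level > 0, so no flow by invB2
      have hl : ¬ ℓ (vinF v) ≤ 0 := fun h => h2 ((hvin v).mpr h)
      have hf0 : f (fsrc, vinF v) = 0 := by
        by_contra h
        exact hl (le_of_eq (invB2 v (Nat.pos_of_ne_zero h)))
      have hd : (redNet E).d (fsrc, vinF v) = 0 := rfl
      omega
    · -- (vout v, fsnk), in S so level ≤ 0, no flow by invB1 and hnn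
      have hl : ℓ (voutF v) ≤ 0 := (hvout v).mp h1
      have hf0 : f (voutF v, fsnk) = 0 := by
        by_contra h
        have := (invB1 v (Nat.pos_of_ne_zero h)).2
        have := (hnn v).1
        omega
      have hd : (redNet E).d (voutF v, fsnk) = 0 := rfl
      omega
    · -- (vin v, vout v): demand 1, flow 1
      have hd : (redNet E).d (vinF v, voutF v) = 1 := by
        simp [redNet, redD, vinF, voutF]
      have hge : 1 ≤ f (vinF v, voutF v) := hd ▸ hf.2.1 _ he
      have hl1 : ℓ (vinF v) ≤ 0 := (hvin v).mp h1
      have hl2 : ¬ ℓ (voutF v) ≤ 0 := fun h => h2 ((hvout v).mpr h)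
      have hle : f (vinF v, voutF v) ≤ 1 := by
        by_contra h
        have hres : ResidualEdge (redNet E) f (vinF v) (voutF v) :=
          Or.inr ⟨he, by omega⟩
        have := invA _ _ hres (hne v).1 (hne v).2.1 (hne v).2.2.1 (hne v).2.2.2
        omega
      omega
    · -- (vout a.1, vin a.2): demand 0, flow 0
      have hd : (redNet E).d (voutF a.1, vinF a.2) = 0 := by
        simp [redNet, redD, vinF, voutF]
      have hl1 : ℓ (voutF a.1) ≤ 0 := (hvout a.1).mp h1
      have hl2 : ¬ ℓ (vinF a.2) ≤ 0 := fun h => h2 ((hvin a.2).mpr h)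
      have hf0 : f (voutF a.1, vinF a.2) = 0 := by
        by_contra h
        have hres : ResidualEdge (redNet E) f (voutF a.1) (vinF a.2) :=
          Or.inr ⟨he, by omega⟩
        have := invA _ _ hres (hne a.1).2.2.1 (hne a.1).2.2.2 (hne a.2).1 (hne a.2).2.1
        omega
      omega
  -- demand of the layered cut equals cut flow
  have hDF : (cutDemand (redNet E) S : ℤ) = cutFlow (redNet E) S f := by
    unfold cutDemand cutFlow
    have hempty : (redNet E).E.filter (fun e => e.1 ∉ S ∧ e.2 ∈ S) = ∅ := by
      refine Finset.filter_false_of_mem fun e he => ?_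
      rintro ⟨h1, h2⟩
      exact how.2 e he h1 h2
    rw [hempty]
    simp only [Finset.sum_empty, sub_zero]
    push_cast
    refine Finset.sum_congr (by congr) fun e he => ?_
    have he' := Finset.mem_filter.mp he
    exact_mod_cast congrArg Nat.cast (hfd e he'.1 he'.2.1 he'.2.2).symm
  have hsize : (cutDemand (redNet E) S : ℤ) = flowSize (redNet E) f := by
    rw [hDF]
    exact cutFlow_eq_flowSize_s17 (redNet E) f hf S hsrc hsnk
  refine ⟨how, hsize, ?_⟩
  intro S' hS'
  have h1 := cutDemand_le_cutFlow (redNet E) f hf S' hS'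
  rw [cutFlow_eq_flowSize_s17 (redNet E) f hf S' hS'.1.1 hS'.1.2, ← hsize] at h1
  exact_mod_cast h1
end
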